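/- Let p be a prime, P a nontrivial finite p-group with c cyclic subgroups and λ maximal cyclic subgroups, and G = P × C_p. Then the number of maximal cyclic subgroups of G equals (p−1)(c−1)+λ+1. -/

import Mathlib

def IsMaximalCyclic {G : Type*} [Group G] (H : Subgroup G) : Prop :=
  IsCyclic H ∧ ∀ K : Subgroup G, IsCyclic K → H ≤ K → H = K

/-!
Split the maximal cyclic subgroups of `P × C_p` according to whether they lie in `P × 1`.
For `z ≠ 1` the order of any `d ∈ C_p` divides `p`, which divides the order of `z`, so the
projection to `P` is injective on `⟨(z, d)⟩`. Hence a cyclic subgroup containing `⟨z⟩ × 1`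
and projecting onto `⟨z⟩` is `⟨z⟩ × 1` itself, and the maximal cyclic subgroups inside `P × 1`
are the images of those of `P`. A cyclic subgroup `⟨w ^ k⟩ ≤ ⟨w⟩` not inside `P × 1` is
maximal: its generator has nontrivial second coordinate, so `p ∤ k`, and `w ^ k` generates
`⟨w⟩` in the `p`-group `P × C_p`. These subgroups are `1 × C_p` and, for each of the `c - 1`
nontrivial cyclic `D = ⟨g⟩ ≤ P`, the `p - 1` subgroups `⟨(g, a)⟩` with `a ≠ 1`.
-/

open Subgroup

section Counting

variable {α : Type*} [Finite α]

theorem Nat.card_subtype_and_add_card_subtype_and_not (P Q : α → Prop) :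
    Nat.card {x // P x ∧ Q x} + Nat.card {x // P x ∧ ¬ Q x} = Nat.card {x // P x} :=
  Set.ncard_inter_add_ncard_sdiff_eq_ncard {x | P x} {x | Q x}

omit [Finite α] in
theorem Nat.card_subtype_and_ne {P : α → Prop} {a : α} (ha : P a) :
    Nat.card {x // P x ∧ x ≠ a} = Nat.card {x // P x} - 1 :=
  Set.ncard_sdiff_singleton_of_mem (s := {x | P x}) ha

theorem Nat.card_subtype_ne (a : α) : Nat.card {x // x ≠ a} = Nat.card α - 1 := by
  rw [← Set.ncard_singleton a]
  exact Set.ncard_compl {a}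

end Counting

section Group

variable {G N : Type*} [Group G] [Group N]

theorem MonoidHom.inl_injective : Function.Injective (MonoidHom.inl G N) :=
  fun _ _ h => congrArg Prod.fst h

theorem MonoidHom.mem_range_inl {z : G × N} : z ∈ (MonoidHom.inl G N).range ↔ z.2 = 1 :=
  ⟨by rintro ⟨x, rfl⟩; rfl, fun h => ⟨z.1, Prod.ext rfl h.symm⟩⟩

theorem MonoidHom.mem_range_inr {z : G × N} : z ∈ (MonoidHom.inr G N).range ↔ z.1 = 1 :=
  ⟨by rintro ⟨x, rfl⟩; rfl, fun h => ⟨z.2, Prod.ext h.symm rfl⟩⟩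

theorem Subgroup.isCyclic_map (f : G →* N) {H : Subgroup G} (hH : IsCyclic H) :
    IsCyclic (H.map f) :=
  isCyclic_of_surjective (f.subgroupMap H) (f.subgroupMap_surjective H)

noncomputable def cyclicGenerator {H : Subgroup G} (hH : IsCyclic H) : G :=
  ((Subgroup.isCyclic_iff_exists_zpowers_eq_top H).mp hH).choose

theorem zpowers_cyclicGenerator {H : Subgroup G} (hH : IsCyclic H) :
    zpowers (cyclicGenerator hH) = H :=
  ((Subgroup.isCyclic_iff_exists_zpowers_eq_top H).mp hH).choose_spec

theorem cyclicGenerator_ne_one {H : Subgroup G} (hH : IsCyclic H) (hH₁ : H ≠ ⊥) :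
    cyclicGenerator hH ≠ 1 := fun h =>
  hH₁ (by rw [← zpowers_cyclicGenerator hH, h, zpowers_one_eq_bot])

theorem IsMaximalCyclic.ne_bot [Nontrivial G] {H : Subgroup G} (hH : IsMaximalCyclic H) :
    H ≠ ⊥ := by
  rintro rfl
  obtain ⟨g, hg⟩ := exists_ne (1 : G)
  exact hg (zpowers_eq_bot.mp (hH.2 _ inferInstance bot_le).symm)

theorem IsMaximalCyclic.of_map {f : G →* N} (hf : Function.Injective f) {K : Subgroup G}
    (hK : IsMaximalCyclic (K.map f)) : IsMaximalCyclic K :=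
  ⟨(K.equivMapOfInjective f hf).isCyclic.mpr hK.1,
    fun _ hL hKL => map_injective hf (hK.2 _ (isCyclic_map f hL) (map_mono hKL))⟩

theorem IsPGroup.prod {p : ℕ} (hG : IsPGroup p G) (hN : IsPGroup p N) : IsPGroup p (G × N) := by
  rintro ⟨g, n⟩
  obtain ⟨k, hk⟩ := hG g
  obtain ⟨m, hm⟩ := hN n
  refine ⟨k + m, Prod.ext ?_ ?_⟩
  · simp [pow_add, pow_mul, hk]
  · simp [pow_add, pow_mul', hm]

theorem IsPGroup.zpowers_pow_eq {p : ℕ} [Fact p.Prime] (hG : IsPGroup p G) (g : G) {k : ℕ}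
    (hk : ¬ p ∣ k) : zpowers (g ^ k) = zpowers g := by
  obtain ⟨m, hm⟩ := exists_pow_eq_self_of_coprime
    (hG.orderOf_coprime ((Nat.Prime.coprime_iff_not_dvd Fact.out).mpr hk) g).symm
  refine le_antisymm (zpowers_le.mpr (Subgroup.pow_mem _ (mem_zpowers g) k)) (zpowers_le.mpr ?_)
  simpa only [hm] using Subgroup.pow_mem _ (mem_zpowers (g ^ k)) m

theorem injOn_fst_zpowers_mk {x : G} {a : N} (h : orderOf a ∣ orderOf x) :
    Set.InjOn Prod.fst (zpowers (x, a) : Set (G × N)) := by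
  rintro _ ⟨k, rfl⟩ _ ⟨m, rfl⟩ hkm
  have hx : x ^ k = x ^ m := by simpa using hkm
  have ha : a ^ k = a ^ m := zpow_eq_zpow_iff_modEq.mpr
    ((zpow_eq_zpow_iff_modEq.mp hx).of_dvd (Int.natCast_dvd_natCast.mpr h))
  simp [hx, ha]

theorem zpowers_mk_zpow_eq {x : G} {a : N} (h : orderOf a ∣ orderOf x) {k : ℤ}
    (hk : zpowers (x ^ k) = zpowers x) : zpowers (x ^ k, a ^ k) = zpowers (x, a) := by
  have hxa : (x ^ k, a ^ k) = (x, a) ^ k := rfl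
  obtain ⟨m, hm⟩ := mem_zpowers_iff.mp (hk ▸ mem_zpowers x : x ∈ zpowers (x ^ k))
  have hm' : (x ^ k, a ^ k) ^ m = (x, a) :=
    injOn_fst_zpowers_mk h (hxa ▸ zpow_mem (zpow_mem (mem_zpowers _) k) m) (mem_zpowers _) hm
  exact le_antisymm (zpowers_le.mpr (hxa ▸ zpow_mem (mem_zpowers _) k))
    (zpowers_le.mpr (hm' ▸ zpow_mem (mem_zpowers _) m))

end Group

section PrimeOrderFactor

variable {p : ℕ} [Fact p.Prime] {P Q : Type*} [Group P] [Group Q]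

theorem orderOf_dvd_orderOf_of_ne_one (hP : IsPGroup p P) (hQ : Nat.card Q = p) {x : P}
    (hx : x ≠ 1) (a : Q) : orderOf a ∣ orderOf x :=
  (hQ ▸ orderOf_dvd_natCard a).trans (hP.dvd_orderOf hx)

theorem zpowers_one_mk_eq_range_inr (hQ : Nat.card Q = p) {a : Q} (ha : a ≠ 1) :
    zpowers ((1, a) : P × Q) = (MonoidHom.inr P Q).range := by
  rw [MonoidHom.range_eq_map, ← zpowers_eq_top_of_prime_card hQ ha, MonoidHom.map_zpowers,
    MonoidHom.inr_apply]

theorem isMaximalCyclic_map_inl [Nontrivial P] (hP : IsPGroup p P) (hQ : Nat.card Q = p)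
    {K : Subgroup P} (hK : IsMaximalCyclic K) : IsMaximalCyclic (K.map (MonoidHom.inl P Q)) := by
  refine ⟨isCyclic_map _ hK.1, fun L hL hKL => ?_⟩
  obtain ⟨⟨z, d⟩, rfl⟩ := (Subgroup.isCyclic_iff_exists_zpowers_eq_top L).mp hL
  have hK_eq : K = zpowers z := hK.2 _ inferInstance <| by
    simpa [map_map, MonoidHom.map_zpowers] using map_mono (f := MonoidHom.fst P Q) hKL
  have hz : z ≠ 1 := by
    rintro rfl
    exact hK.ne_bot (hK_eq.trans zpowers_one_eq_bot)
  have hd : (z, (1 : Q)) = (z, d) :=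
    injOn_fst_zpowers_mk (orderOf_dvd_orderOf_of_ne_one hP hQ hz d)
      (hKL ⟨z, hK_eq ▸ mem_zpowers z, rfl⟩) (mem_zpowers _) rfl
  rw [hK_eq, MonoidHom.map_zpowers, MonoidHom.inl_apply, hd]

theorem isMaximalCyclic_of_not_le_range_inl (hP : IsPGroup p P) (hQ : Nat.card Q = p)
    {H : Subgroup (P × Q)} (hH : IsCyclic H) (hHT : ¬ H ≤ (MonoidHom.inl P Q).range) :
    IsMaximalCyclic H := by
  have hPQ : IsPGroup p (P × Q) := hP.prod (IsPGroup.of_card (n := 1) (by rw [hQ, pow_one]))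
  refine ⟨hH, fun L hL hHL => ?_⟩
  obtain ⟨w, rfl⟩ := (Subgroup.isCyclic_iff_exists_zpowers_eq_top L).mp hL
  obtain ⟨h, rfl⟩ := (Subgroup.isCyclic_iff_exists_zpowers_eq_top H).mp hH
  have hw : IsOfFinOrder w := hPQ.isOfFinOrder (Fact.out : p.Prime).ne_zero w
  obtain ⟨k, rfl⟩ := hw.mem_powers_iff_mem_zpowers.mpr (hHL (mem_zpowers h))
  refine hPQ.zpowers_pow_eq w fun hk => hHT (zpowers_le.mpr (MonoidHom.mem_range_inl.mpr ?_))
  exact orderOf_dvd_iff_pow_eq_one.mp ((hQ ▸ orderOf_dvd_natCard w.2).trans hk)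

theorem card_maximalCyclic_le_range_inl [Nontrivial P] (hP : IsPGroup p P) (hQ : Nat.card Q = p) :
    Nat.card {H : Subgroup (P × Q) // IsMaximalCyclic H ∧ H ≤ (MonoidHom.inl P Q).range}
      = Nat.card {K : Subgroup P // IsMaximalCyclic K} :=
  Nat.card_congr
    { toFun H := ⟨H.1.comap (MonoidHom.inl P Q), IsMaximalCyclic.of_map MonoidHom.inl_injective
        ((map_comap_eq_self H.2.2).symm ▸ H.2.1)⟩
      invFun K := ⟨K.1.map _, isMaximalCyclic_map_inl hP hQ K.2, map_le_range _ _⟩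
      left_inv H := Subtype.ext (map_comap_eq_self H.2.2)
      right_inv K := Subtype.ext (comap_map_eq_self_of_injective MonoidHom.inl_injective K.1) }

variable (P Q) in
noncomputable def cyclicSubgroupOfProd :
    ({D : Subgroup P // IsCyclic D ∧ D ≠ ⊥} × {a : Q // a ≠ 1}) ⊕ Unit → Subgroup (P × Q)
  | .inl (D, a) => zpowers (cyclicGenerator D.2.1, a.1)
  | .inr _ => (MonoidHom.inr P Q).range

theorem cyclicSubgroupOfProd_injective (hP : IsPGroup p P) (hQ : Nat.card Q = p) :
    Function.Injective (cyclicSubgroupOfProd P Q) := by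
  have map_fst : ∀ (D : {D : Subgroup P // IsCyclic D ∧ D ≠ ⊥}) (a : Q),
      (zpowers (cyclicGenerator D.2.1, a)).map (MonoidHom.fst P Q) = D := fun D a => by
    rw [MonoidHom.map_zpowers, MonoidHom.coe_fst, zpowers_cyclicGenerator]
  have not_mem_range_inr : ∀ (D : {D : Subgroup P // IsCyclic D ∧ D ≠ ⊥}) (a : Q),
      (cyclicGenerator D.2.1, a) ∉ (MonoidHom.inr P Q).range := fun D a h =>
    cyclicGenerator_ne_one D.2.1 D.2.2 (MonoidHom.mem_range_inr.mp h)
  rintro (⟨D, a⟩ | ⟨⟩) (⟨D', a'⟩ | ⟨⟩) h <;> dsimp only [cyclicSubgroupOfProd] at h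
  · obtain rfl : D = D' := Subtype.ext ((map_fst D a).symm.trans (h ▸ map_fst D' a'))
    have ha : (cyclicGenerator D.2.1, a.1) = (cyclicGenerator D.2.1, a'.1) :=
      injOn_fst_zpowers_mk
        (orderOf_dvd_orderOf_of_ne_one hP hQ (cyclicGenerator_ne_one D.2.1 D.2.2) a)
        (mem_zpowers _) (h ▸ mem_zpowers _) rfl
    rw [Subtype.ext (Prod.mk.inj ha).2]
  · exact (not_mem_range_inr D a (h ▸ mem_zpowers _)).elim
  · exact (not_mem_range_inr D' a' (h.symm ▸ mem_zpowers _)).elim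
  · rfl

theorem range_cyclicSubgroupOfProd (hP : IsPGroup p P) (hQ : Nat.card Q = p) :
    Set.range (cyclicSubgroupOfProd P Q)
      = {H : Subgroup (P × Q) | IsCyclic H ∧ ¬ H ≤ (MonoidHom.inl P Q).range} := by
  have not_le_of_mem {H : Subgroup (P × Q)} {x : P} {a : Q} (ha : a ≠ 1) (hxa : (x, a) ∈ H) :
      ¬ H ≤ (MonoidHom.inl P Q).range := fun hle => ha (MonoidHom.mem_range_inl.mp (hle hxa))
  ext H
  constructor
  · rintro ⟨⟨D, a⟩ | ⟨⟩, rfl⟩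
    · exact ⟨isCyclic_zpowers _, not_le_of_mem a.2 (mem_zpowers _)⟩
    · have : Finite Q := Nat.finite_of_card_ne_zero (hQ ▸ (Fact.out : p.Prime).ne_zero)
      have : Nontrivial Q := Finite.one_lt_card_iff_nontrivial.mp (hQ ▸ (Fact.out : p.Prime).one_lt)
      obtain ⟨a, ha⟩ := exists_ne (1 : Q)
      rw [cyclicSubgroupOfProd, ← zpowers_one_mk_eq_range_inr hQ ha]
      exact ⟨inferInstance, not_le_of_mem ha (mem_zpowers _)⟩
  · rintro ⟨hH, hHT⟩
    obtain ⟨⟨x, a⟩, rfl⟩ := (Subgroup.isCyclic_iff_exists_zpowers_eq_top H).mp hH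
    have ha : a ≠ 1 := fun ha => hHT (zpowers_le.mpr (MonoidHom.mem_range_inl.mpr ha))
    by_cases hx : x = 1
    · subst hx
      exact ⟨.inr (), (zpowers_one_mk_eq_range_inr hQ ha).symm⟩
    let D : {D : Subgroup P // IsCyclic D ∧ D ≠ ⊥} := ⟨zpowers x, inferInstance, by simpa using hx⟩
    have hgx : zpowers (cyclicGenerator D.2.1) = zpowers x := zpowers_cyclicGenerator D.2.1
    obtain ⟨k, hk⟩ := mem_zpowers_iff.mp (hgx ▸ mem_zpowers _ : cyclicGenerator D.2.1 ∈ zpowers x)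
    have hgen : zpowers (cyclicGenerator D.2.1, a ^ k) = zpowers (x, a) := by
      rw [← hk] at hgx ⊢
      exact zpowers_mk_zpow_eq (orderOf_dvd_orderOf_of_ne_one hP hQ hx a) hgx
    have hak : a ^ k ≠ 1 := fun h => hHT (hgen ▸ zpowers_le.mpr (MonoidHom.mem_range_inl.mpr h))
    exact ⟨.inl (D, ⟨a ^ k, hak⟩), hgen⟩

theorem card_cyclic_not_le_range_inl [Finite P] (hP : IsPGroup p P) (hQ : Nat.card Q = p) :
    Nat.card {H : Subgroup (P × Q) // IsCyclic H ∧ ¬ H ≤ (MonoidHom.inl P Q).range}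
      = (p - 1) * (Nat.card {D : Subgroup P // IsCyclic D} - 1) + 1 := by
  have : Finite Q := Nat.finite_of_card_ne_zero (hQ ▸ (Fact.out : p.Prime).ne_zero)
  have hcard := Nat.card_range_of_injective (cyclicSubgroupOfProd_injective hP hQ)
  rw [range_cyclicSubgroupOfProd hP hQ] at hcard
  refine hcard.trans ?_
  rw [Nat.card_sum, Nat.card_prod, Nat.card_subtype_and_ne (P := fun D : Subgroup P => IsCyclic D)
    isCyclic_of_subsingleton, Nat.card_subtype_ne, hQ, Nat.card_unique (α := Unit), mul_comm]

theorem card_maximalCyclic_not_le_range_inl [Finite P] (hP : IsPGroup p P) (hQ : Nat.card Q = p) :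
    Nat.card {H : Subgroup (P × Q) // IsMaximalCyclic H ∧ ¬ H ≤ (MonoidHom.inl P Q).range}
      = (p - 1) * (Nat.card {D : Subgroup P // IsCyclic D} - 1) + 1 := by
  rw [← card_cyclic_not_le_range_inl hP hQ]
  exact Nat.card_congr <| Equiv.subtypeEquivRight fun H =>
    ⟨fun h => ⟨h.1.1, h.2⟩, fun h => ⟨isMaximalCyclic_of_not_le_range_inl hP hQ h.1 h.2, h.2⟩⟩

end PrimeOrderFactor

theorem stmt6 (p : ℕ) (hp : p.Prime) (P : Type*) [Group P] [Finite P] [Nontrivial P]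
    (hP : IsPGroup p P) (c l : ℕ) (hc : c = Nat.card {H : Subgroup P // IsCyclic H})
    (hl : l = Nat.card {H : Subgroup P // IsMaximalCyclic H}) :
    Nat.card {H : Subgroup (P × Multiplicative (ZMod p)) // IsMaximalCyclic H}
      = (p - 1) * (c - 1) + l + 1 := by
  have : Fact p.Prime := ⟨hp⟩
  have hQ : Nat.card (Multiplicative (ZMod p)) = p := by
    have : NeZero p := ⟨hp.ne_zero⟩
    rw [Nat.card_congr Multiplicative.toAdd, Nat.card_zmod]
  rw [← Nat.card_subtype_and_add_card_subtype_and_not _ (· ≤ (MonoidHom.inl P _).range),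
    card_maximalCyclic_le_range_inl hP hQ, card_maximalCyclic_not_le_range_inl hP hQ, hc, hl]
  ring
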